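/- Let F, K, F', K' ∈ Matrix (Fin 3) (Fin 2) ℝ. Assume the orientation conditions det [F.col 0 | F.col 1 | e₃] > 0 and det [F'.col 0 | F'.col 1 | e₃] > 0 (determinants of the 3×3 matrices whose columns are the two columns of F, resp. F', together with e₃). If Fᵀ F = F'ᵀ F', Fᵀ e₃ = F'ᵀ e₃, and Fᵀ C K = F'ᵀ C K', then there exist a special orthogonal matrix R ∈ Matrix (Fin 3) (Fin 3) ℝ with R e₃ = e₃ and a vector t ∈ ℝ² such that F' = R F and K' = R K + e₃ tᵀ. (Orbit-separation lemma underlying the necessity part of the paper's representation theorem.) -/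

import Mathlib

open Matrix

/-! The augmented matrices `A = aug F` and `A' = aug F'` have the same Gram matrix, so
`R = A' A⁻¹` is orthogonal; it has positive determinant and fixes `e₃` because `A` and `A'` do,
and `R A = A'` gives `F' = R F`. A rotation fixing `e₃` commutes with `C = e₃ × ·`, so the third
invariant becomes `Fᵀ C D = 0` for `D = K - Rᵀ K'`. As also `e₃ᵀ C = 0` and `Aᵀ` is invertible,
`C D = 0`, i.e. `D = e₃ sᵀ`, and `t = -s` works. -/

/-- The unit normal `e₃` in the fixed material frame. -/
def e3 : Fin 3 → ℝ := ![0, 0, 1]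

/-- The alternator matrix `C` of the map `v ↦ e₃ × v`. -/
def altC : Matrix (Fin 3) (Fin 3) ℝ := !![0, -1, 0; 1, 0, 0; 0, 0, 0]

/-- The 3×3 matrix `[F.col 0 | F.col 1 | e₃]` whose columns are the two columns
of `F` together with `e₃`. -/
def aug (F : Matrix (Fin 3) (Fin 2) ℝ) : Matrix (Fin 3) (Fin 3) ℝ :=
  Matrix.of fun i j => ![F i 0, F i 1, e3 i] j

namespace Matrix

variable {n : Type*} [Fintype n] [DecidableEq n] {R : Type*} [CommRing R]

theorem transpose_mul_self_eq_one_of_transpose_mul_self_eq {A B : Matrix n n R}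
    (hA : IsUnit A.det) (h : Aᵀ * A = Bᵀ * B) : (B * A⁻¹)ᵀ * (B * A⁻¹) = 1 := by
  calc (B * A⁻¹)ᵀ * (B * A⁻¹) = A⁻¹ᵀ * (Bᵀ * B) * A⁻¹ := by
        simp only [transpose_mul, Matrix.mul_assoc]
    _ = (A * A⁻¹)ᵀ * (A * A⁻¹) := by
        simp only [← h, transpose_mul, Matrix.mul_assoc]
    _ = 1 := by simp [mul_nonsing_inv A hA]

theorem det_eq_one_of_transpose_mul_self_eq_one [LinearOrder R] [IsStrictOrderedRing R]
    {A : Matrix n n R} (h : Aᵀ * A = 1) (hpos : 0 < A.det) : A.det = 1 := by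
  have hsq : A.det * A.det = 1 := by
    simpa using congrArg det h
  exact (mul_self_eq_one_iff.mp hsq).resolve_right (by linarith)

theorem mulVec_cross_mulVec {A : Matrix (Fin 3) (Fin 3) R} (h : A * Aᵀ = 1) (hdet : A.det = 1)
    (a b : Fin 3 → R) : (A *ᵥ a) ⨯₃ (A *ᵥ b) = A *ᵥ (a ⨯₃ b) := by
  -- compare triple products with an arbitrary `w = A u`: both equal `det ![u, a, b]`
  refine dotProduct_eq _ _ fun w => ?_
  rw [dotProduct_comm, dotProduct_comm _ w]
  set u := Aᵀ *ᵥ w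
  have hw : w = A *ᵥ u := by rw [mulVec_mulVec, h, one_mulVec]
  have hrows : ![A *ᵥ u, A *ᵥ a, A *ᵥ b] = of ![u, a, b] * Aᵀ := by
    ext i : 1
    rw [mul_apply_eq_vecMul, vecMul_transpose]
    fin_cases i <;> rfl
  calc w ⬝ᵥ (A *ᵥ a) ⨯₃ (A *ᵥ b) = det ![A *ᵥ u, A *ᵥ a, A *ᵥ b] := by
        rw [hw, triple_product_eq_det]
    _ = u ⬝ᵥ a ⨯₃ b := by
        rw [hrows, det_mul, det_transpose, hdet, mul_one, triple_product_eq_det]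
        rfl
    _ = w ⬝ᵥ A *ᵥ (a ⨯₃ b) := by
        rw [dotProduct_mulVec, ← mulVec_transpose]

end Matrix

theorem altC_mulVec (v : Fin 3 → ℝ) : altC *ᵥ v = e3 ⨯₃ v := by
  ext i
  fin_cases i <;> simp [altC, e3, cross_apply, mulVec, dotProduct, Fin.sum_univ_three]

theorem e3_vecMul_altC : e3 ᵥ* altC = 0 := by
  ext j
  fin_cases j <;> simp [altC, e3, vecMul, dotProduct, Fin.sum_univ_three]

theorem commute_altC {R : Matrix (Fin 3) (Fin 3) ℝ} (hR : R * Rᵀ = 1) (hdet : R.det = 1)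
    (he : R *ᵥ e3 = e3) : Commute R altC :=
  ext_iff_mulVec.2 fun v => by
    rw [← mulVec_mulVec, ← mulVec_mulVec, altC_mulVec, altC_mulVec,
      ← mulVec_cross_mulVec hR hdet, he]

theorem eq_vecMulVec_of_altC_mul_eq_zero {n : Type*} {D : Matrix (Fin 3) n ℝ}
    (h : altC * D = 0) : D = vecMulVec e3 (D 2) := by
  ext i j
  have h0 := congrFun₂ h 0 j
  have h1 := congrFun₂ h 1 j
  fin_cases i <;> simp_all [altC, e3, mul_apply, Fin.sum_univ_three, vecMulVec_apply]

theorem aug_mulVec_e3 (F : Matrix (Fin 3) (Fin 2) ℝ) : aug F *ᵥ e3 = e3 := by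
  ext i
  fin_cases i <;> simp [mulVec, dotProduct, Fin.sum_univ_three, aug, e3]

theorem aug_mul (F : Matrix (Fin 3) (Fin 2) ℝ) : aug F * !![(1 : ℝ), 0; 0, 1; 0, 0] = F := by
  ext i j
  fin_cases i <;> fin_cases j <;> simp [mul_apply, Fin.sum_univ_three, aug, e3]

theorem aug_transpose_mul {n : Type*} (F : Matrix (Fin 3) (Fin 2) ℝ) (M : Matrix (Fin 3) n ℝ) :
    (aug F)ᵀ * M = of ![(Fᵀ * M) 0, (Fᵀ * M) 1, e3 ᵥ* M] := by
  ext i j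
  fin_cases i <;> simp [mul_apply, vecMul, dotProduct, aug]

theorem aug_transpose_mul_aug (F : Matrix (Fin 3) (Fin 2) ℝ) :
    (aug F)ᵀ * aug F = !![(Fᵀ * F) 0 0, (Fᵀ * F) 0 1, (Fᵀ *ᵥ e3) 0;
      (Fᵀ * F) 1 0, (Fᵀ * F) 1 1, (Fᵀ *ᵥ e3) 1;
      (Fᵀ *ᵥ e3) 0, (Fᵀ *ᵥ e3) 1, 1] := by
  ext i j
  fin_cases i <;> fin_cases j <;> simp [mul_apply, mulVec, dotProduct, aug, e3, Fin.sum_univ_three]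

theorem eq_zero_of_transpose_mul_eq_zero {n : Type*} {F : Matrix (Fin 3) (Fin 2) ℝ}
    (hF : IsUnit (aug F).det) {M : Matrix (Fin 3) n ℝ} (hM : Fᵀ * M = 0) (he : e3 ᵥ* M = 0) :
    M = 0 := by
  have hAM : (aug F)ᵀ * M = 0 := by
    rw [aug_transpose_mul, hM, he]
    ext i j
    fin_cases i <;> rfl
  have hFt : IsUnit (aug F)ᵀ.det := by rwa [det_transpose]
  calc M = ((aug F)ᵀ⁻¹ * (aug F)ᵀ) * M := by rw [nonsing_inv_mul _ hFt, Matrix.one_mul]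
    _ = 0 := by rw [Matrix.mul_assoc, hAM, Matrix.mul_zero]

theorem exists_rotation_of_gram_eq {F F' : Matrix (Fin 3) (Fin 2) ℝ}
    (hor : 0 < (aug F).det) (hor' : 0 < (aug F').det)
    (h1 : Fᵀ * F = F'ᵀ * F') (h2 : Fᵀ *ᵥ e3 = F'ᵀ *ᵥ e3) :
    ∃ R : Matrix (Fin 3) (Fin 3) ℝ, Rᵀ * R = 1 ∧ R.det = 1 ∧ R *ᵥ e3 = e3 ∧ F' = R * F := by
  have hA : IsUnit (aug F).det := hor.ne'.isUnit
  have horth := transpose_mul_self_eq_one_of_transpose_mul_self_eq (B := aug F') hA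
    (by rw [aug_transpose_mul_aug, aug_transpose_mul_aug, h1, h2])
  refine ⟨aug F' * (aug F)⁻¹, horth, det_eq_one_of_transpose_mul_self_eq_one horth ?_, ?_, ?_⟩
  · rw [det_mul, det_nonsing_inv, Ring.inverse_eq_inv]
    positivity
  · have hinv : (aug F)⁻¹ *ᵥ e3 = e3 := by
      conv_lhs => rw [← aug_mulVec_e3 F]
      rw [mulVec_mulVec, nonsing_inv_mul _ hA, one_mulVec]
    rw [← mulVec_mulVec, hinv, aug_mulVec_e3]
  · calc F' = aug F' * !![(1 : ℝ), 0; 0, 1; 0, 0] := (aug_mul F').symm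
      _ = aug F' * (aug F)⁻¹ * (aug F * !![(1 : ℝ), 0; 0, 1; 0, 0]) := by
          rw [Matrix.mul_assoc, ← Matrix.mul_assoc (aug F)⁻¹, nonsing_inv_mul _ hA, Matrix.one_mul]
      _ = aug F' * (aug F)⁻¹ * F := by rw [aug_mul]

theorem exists_vecMulVec_of_transpose_mul_altC_mul_eq
    {F K F' K' : Matrix (Fin 3) (Fin 2) ℝ} {R : Matrix (Fin 3) (Fin 3) ℝ}
    (hA : IsUnit (aug F).det) (hR : Rᵀ * R = 1) (hdet : R.det = 1) (he : R *ᵥ e3 = e3)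
    (hF : F' = R * F) (h3 : Fᵀ * altC * K = F'ᵀ * altC * K') :
    ∃ t : Fin 2 → ℝ, K' = R * K + vecMulVec e3 t := by
  have hR' : R * Rᵀ = 1 := mul_eq_one_comm.mp hR
  have hcomm : Commute Rᵀ altC := by
    refine commute_altC (by rwa [transpose_transpose]) (by rwa [det_transpose]) ?_
    conv_lhs => rw [← he]
    rw [mulVec_mulVec, hR, one_mulVec]
  set D := K - Rᵀ * K' with hD_def
  have hFD : Fᵀ * (altC * D) = 0 := by
    rw [hD_def, Matrix.mul_sub, Matrix.mul_sub, ← Matrix.mul_assoc, h3, hF, transpose_mul]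
    simp only [Matrix.mul_assoc]
    rw [← Matrix.mul_assoc Rᵀ altC, hcomm.eq, Matrix.mul_assoc, sub_self]
  have heD : e3 ᵥ* (altC * D) = 0 := by
    rw [← vecMul_vecMul, e3_vecMul_altC, zero_vecMul]
  have hD := eq_vecMulVec_of_altC_mul_eq_zero (eq_zero_of_transpose_mul_eq_zero hA hFD heD)
  refine ⟨-D 2, ?_⟩
  calc K' = R * (Rᵀ * K') := by rw [← Matrix.mul_assoc, hR', Matrix.one_mul]
    _ = R * (K - vecMulVec e3 (D 2)) := by rw [← hD, hD_def, sub_sub_cancel]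
    _ = R * K + vecMulVec e3 (-D 2) := by
        rw [Matrix.mul_sub, mul_vecMulVec, he, vecMulVec_neg, sub_eq_add_neg]

theorem drilling_orbit_separation
    (F K F' K' : Matrix (Fin 3) (Fin 2) ℝ)
    (hor : 0 < (aug F).det) (hor' : 0 < (aug F').det)
    (h1 : Fᵀ * F = F'ᵀ * F')
    (h2 : Fᵀ.mulVec e3 = F'ᵀ.mulVec e3)
    (h3 : Fᵀ * altC * K = F'ᵀ * altC * K') :
    ∃ (R : Matrix (Fin 3) (Fin 3) ℝ) (t : Fin 2 → ℝ),
      Rᵀ * R = 1 ∧ R.det = 1 ∧ R.mulVec e3 = e3 ∧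
      F' = R * F ∧ K' = R * K + vecMulVec e3 t := by
  obtain ⟨R, hR, hdet, he, hF⟩ := exists_rotation_of_gram_eq hor hor' h1 h2
  obtain ⟨t, ht⟩ :=
    exists_vecMulVec_of_transpose_mul_altC_mul_eq hor.ne'.isUnit hR hdet he hF h3
  exact ⟨R, t, hR, hdet, he, hF, ht⟩
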